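/- The Teichmüller modulus function τ(t) = 2·K(1/√(1+t)) / K(√(t/(1+t))) is strictly decreasing on (0,∞), with τ(t) → ∞ as t → 0⁺ and τ(t) → 0 as t → ∞. -/

import Mathlib

open Real

/-- Complete elliptic integral of the first kind. -/
noncomputable def ellK (r : ℝ) : ℝ :=
  ∫ θ in (0:ℝ)..(π/2), 1 / Real.sqrt (1 - r ^ 2 * Real.sin θ ^ 2)

/-- Complete elliptic integral of the second kind. -/
noncomputable def ellE (r : ℝ) : ℝ :=
  ∫ θ in (0:ℝ)..(π/2), Real.sqrt (1 - r ^ 2 * Real.sin θ ^ 2)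

/-- Complementary elliptic integral K'(k) = K(√(1-k²)). -/
noncomputable def ellK' (k : ℝ) : ℝ := ellK (Real.sqrt (1 - k ^ 2))

/-- Complementary elliptic integral E'(k) = E(√(1-k²)). -/
noncomputable def ellE' (k : ℝ) : ℝ := ellE (Real.sqrt (1 - k ^ 2))

/-- The Teichmüller modulus function τ. -/
noncomputable def tau (t : ℝ) : ℝ :=
  2 * ellK (1 / Real.sqrt (1 + t)) / ellK (Real.sqrt (t / (1 + t)))

/-! τ(t) = 2 K(c) / K(k) with c = 1/√(1+t) decreasing from 1 to 0 and k = √(t/(1+t))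
increasing from 0 to 1. Since K is strictly increasing on [0,1), tends to K(0) = π/2 at 0 and
blows up at 1⁻, monotonicity and both limits follow. The blow-up comes from the bound
1 - r² sin²θ ≤ 2(1-r) + (π/2-θ)², which gives K(r) ≥ arsinh(π / (2√(2(1-r)))). -/

open Filter Set Topology

lemma one_sub_sq_mul_sin_sq_pos {r : ℝ} (hr : r ^ 2 < 1) (θ : ℝ) :
    0 < 1 - r ^ 2 * sin θ ^ 2 := by
  nlinarith [sin_sq_le_one θ, sq_nonneg r]

lemma continuous_ellK_integrand {r : ℝ} (hr : r ^ 2 < 1) :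
    Continuous fun θ : ℝ => 1 / √(1 - r ^ 2 * sin θ ^ 2) :=
  continuous_const.div (by fun_prop) fun θ => (sqrt_pos.2 (one_sub_sq_mul_sin_sq_pos hr θ)).ne'

lemma pi_div_two_le_ellK {r : ℝ} (hr : r ^ 2 < 1) : π / 2 ≤ ellK r := by
  calc π / 2 = ∫ _ in (0:ℝ)..(π/2), (1:ℝ) := by simp
    _ ≤ ellK r := by
      refine intervalIntegral.integral_mono_on (by positivity) intervalIntegrable_const
        ((continuous_ellK_integrand hr).intervalIntegrable _ _) fun θ _ => ?_
      rw [le_one_div (by norm_num) (sqrt_pos.2 (one_sub_sq_mul_sin_sq_pos hr θ)), div_one]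
      exact sqrt_le_one.2 (by nlinarith [sq_nonneg (r * sin θ)])

lemma ellK_pos {r : ℝ} (hr : r ^ 2 < 1) : 0 < ellK r :=
  (div_pos pi_pos two_pos).trans_le (pi_div_two_le_ellK hr)

lemma ellK_le_pi_div_two_div_sqrt {r : ℝ} (hr : r ^ 2 < 1) :
    ellK r ≤ π / 2 / √(1 - r ^ 2) := by
  calc ellK r ≤ ∫ _ in (0:ℝ)..(π/2), 1 / √(1 - r ^ 2) := by
        refine intervalIntegral.integral_mono_on (by positivity)
          ((continuous_ellK_integrand hr).intervalIntegrable _ _) intervalIntegrable_const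
          fun θ _ => one_div_le_one_div_of_le (sqrt_pos.2 (by linarith)) (sqrt_le_sqrt ?_)
        nlinarith [sq_nonneg r, sin_sq_le_one θ]
    _ = π / 2 / √(1 - r ^ 2) := by simp [div_eq_mul_inv]

lemma ellK_strictMonoOn : StrictMonoOn ellK (Ico 0 1) := by
  rintro r ⟨hr0, -⟩ s ⟨-, hs1⟩ hrs
  have hs2 : s ^ 2 < 1 := by nlinarith
  have hrs2 : r ^ 2 < s ^ 2 := by nlinarith
  refine intervalIntegral.integral_lt_integral_of_continuousOn_of_le_of_exists_lt (by positivity)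
    (continuous_ellK_integrand (hrs2.trans hs2)).continuousOn
    (continuous_ellK_integrand hs2).continuousOn (fun θ _ => ?_)
    ⟨π / 2, ⟨by positivity, le_rfl⟩, ?_⟩
  · refine one_div_le_one_div_of_le (sqrt_pos.2 (one_sub_sq_mul_sin_sq_pos hs2 θ))
      (sqrt_le_sqrt ?_)
    nlinarith [sq_nonneg (sin θ)]
  · refine one_div_lt_one_div_of_lt (sqrt_pos.2 (one_sub_sq_mul_sin_sq_pos hs2 _))
      (sqrt_lt_sqrt ?_ ?_)
    all_goals simp only [sin_pi_div_two]; linarith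

lemma integral_one_div_sqrt_sq_add_sq {a : ℝ} (ha : 0 < a) (b : ℝ) :
    ∫ x in (0:ℝ)..b, 1 / √(a ^ 2 + x ^ 2) = arsinh (b / a) := by
  have hpos : ∀ x : ℝ, 0 < √(a ^ 2 + x ^ 2) := fun x => sqrt_pos.2 (by positivity)
  have hderiv : ∀ x ∈ uIcc 0 b,
      HasDerivAt (fun x => arsinh (x / a)) (1 / √(a ^ 2 + x ^ 2)) x := by
    intro x _
    refine ((hasDerivAt_id x).div_const a).arsinh.congr_deriv ?_
    have : √(1 + (x / a) ^ 2) = √(a ^ 2 + x ^ 2) / a := by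
      rw [show 1 + (x / a) ^ 2 = (a ^ 2 + x ^ 2) / a ^ 2 by field_simp,
        sqrt_div (by positivity), sqrt_sq ha.le]
    rw [id, smul_eq_mul, this]
    field_simp [(hpos x).ne']
  rw [intervalIntegral.integral_eq_sub_of_hasDerivAt hderiv
    ((continuous_const.div (by fun_prop) fun x => (hpos x).ne').intervalIntegrable _ _)]
  simp

lemma one_sub_sq_mul_cos_sq_le {r u : ℝ} (hr0 : 0 ≤ r) (hr1 : r < 1) (hu0 : 0 ≤ u)
    (hu : u ≤ π / 2) : 1 - r ^ 2 * cos u ^ 2 ≤ 2 * (1 - r) + u ^ 2 := by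
  have hc0 : 0 ≤ cos u := cos_nonneg_of_mem_Icc ⟨by linarith [pi_pos], hu⟩
  have hrc : r * cos u ≤ 1 := mul_le_one₀ hr1.le hc0 (cos_le_one u)
  nlinarith [mul_le_mul_of_nonneg_left (one_sub_sq_div_two_le_cos (x := u)) hr0]

lemma arsinh_le_ellK {r : ℝ} (hr0 : 0 ≤ r) (hr1 : r < 1) :
    arsinh (π / 2 / √(2 * (1 - r))) ≤ ellK r := by
  have ha : 0 < √(2 * (1 - r)) := sqrt_pos.2 (by linarith)
  have hr2 : r ^ 2 < 1 := by nlinarith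
  have hcomp : ∫ θ in (0:ℝ)..(π/2), 1 / √(√(2 * (1 - r)) ^ 2 + (π / 2 - θ) ^ 2)
      = arsinh (π / 2 / √(2 * (1 - r))) := by
    rw [intervalIntegral.integral_comp_sub_left (fun x => 1 / √(√(2 * (1 - r)) ^ 2 + x ^ 2)),
      sub_self, sub_zero, integral_one_div_sqrt_sq_add_sq ha]
  rw [← hcomp, ellK]
  refine intervalIntegral.integral_mono_on (by positivity)
    ((continuous_const.div (by fun_prop) fun θ =>
      (sqrt_pos.2 (by positivity)).ne').intervalIntegrable _ _)
    ((continuous_ellK_integrand hr2).intervalIntegrable _ _) fun θ hθ => ?_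
  refine one_div_le_one_div_of_le (sqrt_pos.2 (one_sub_sq_mul_sin_sq_pos hr2 θ)) (sqrt_le_sqrt ?_)
  rw [sq_sqrt (by linarith), ← cos_pi_div_two_sub]
  exact one_sub_sq_mul_cos_sq_le hr0 hr1 (by linarith [hθ.2]) (by linarith [hθ.1])

lemma tendsto_ellK_nhds_zero : Tendsto ellK (𝓝 0) (𝓝 (π / 2)) := by
  have hsq : ∀ᶠ r in 𝓝 (0:ℝ), r ^ 2 < 1 :=
    (continuous_pow 2).continuousAt.eventually_lt continuousAt_const (by norm_num)
  have hup : Tendsto (fun r : ℝ => π / 2 / √(1 - r ^ 2)) (𝓝 0) (𝓝 (π / 2)) := by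
    have : ContinuousAt (fun r : ℝ => π / 2 / √(1 - r ^ 2)) 0 :=
      continuousAt_const.div (by fun_prop) (by simp)
    simpa using this.tendsto
  exact tendsto_of_tendsto_of_tendsto_of_le_of_le' tendsto_const_nhds hup
    (hsq.mono fun r => pi_div_two_le_ellK) (hsq.mono fun r => ellK_le_pi_div_two_div_sqrt)

lemma tendsto_ellK_nhdsLT_one : Tendsto ellK (𝓝[<] 1) atTop := by
  have hsqrt : Tendsto (fun r : ℝ => √(2 * (1 - r))) (𝓝[<] 1) (𝓝[>] 0) := by
    refine tendsto_nhdsWithin_iff.2 ⟨?_, eventually_nhdsWithin_of_forall fun r (hr : r < 1) =>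
      sqrt_pos.2 (by linarith)⟩
    simpa using ((by fun_prop : Continuous fun r : ℝ => √(2 * (1 - r))).tendsto 1).mono_left
      nhdsWithin_le_nhds
  have harsinh : Tendsto arsinh atTop atTop :=
    tendsto_atTop_atTop_of_monotone arsinh_strictMono.monotone fun b =>
      ⟨sinh b, (arsinh_sinh b).ge⟩
  refine tendsto_atTop_mono' _ ?_
    (harsinh.comp (hsqrt.inv_tendsto_nhdsGT_zero.const_mul_atTop pi_div_two_pos))
  filter_upwards [Ioo_mem_nhdsLT zero_lt_one] with r hr
  simpa [div_eq_mul_inv] using arsinh_le_ellK hr.1.le hr.2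

lemma one_div_sqrt_one_add_mem_Ioo {t : ℝ} (ht : 0 < t) : 1 / √(1 + t) ∈ Ioo 0 1 :=
  ⟨by positivity, (div_lt_one (by positivity)).2 (lt_sqrt zero_le_one |>.2 (by linarith))⟩

lemma sqrt_div_one_add_mem_Ico {t : ℝ} (ht : 0 ≤ t) : √(t / (1 + t)) ∈ Ico 0 1 :=
  ⟨sqrt_nonneg _, (sqrt_lt' one_pos).2 (by rw [one_pow, div_lt_one (by linarith)]; linarith)⟩

lemma strictAntiOn_one_div_sqrt_one_add : StrictAntiOn (fun t : ℝ => 1 / √(1 + t)) (Ioi (-1)) :=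
  fun s (hs : -1 < s) t _ hst =>
    one_div_lt_one_div_of_lt (sqrt_pos.2 (by linarith)) (sqrt_lt_sqrt (by linarith) (by linarith))

lemma strictMonoOn_sqrt_div_one_add : StrictMonoOn (fun t : ℝ => √(t / (1 + t))) (Ici 0) := by
  intro s (hs : 0 ≤ s) t (ht : 0 ≤ t) hst
  refine sqrt_lt_sqrt (by positivity) ((div_lt_div_iff₀ (by linarith) (by linarith)).2 ?_)
  linarith

lemma tendsto_one_div_sqrt_one_add_nhdsGT_zero :
    Tendsto (fun t : ℝ => 1 / √(1 + t)) (𝓝[>] 0) (𝓝[<] 1) := by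
  refine tendsto_nhdsWithin_iff.2 ⟨?_, eventually_nhdsWithin_of_forall fun t (ht : 0 < t) =>
    (one_div_sqrt_one_add_mem_Ioo ht).2⟩
  have : ContinuousAt (fun t : ℝ => 1 / √(1 + t)) 0 :=
    continuousAt_const.div (by fun_prop) (by simp)
  simpa using this.tendsto.mono_left nhdsWithin_le_nhds

lemma tendsto_one_div_sqrt_one_add_atTop :
    Tendsto (fun t : ℝ => 1 / √(1 + t)) atTop (𝓝 0) := by
  have h1 : Tendsto (fun t : ℝ => √(1 + t)) atTop atTop :=
    tendsto_sqrt_atTop.comp (tendsto_atTop_add_const_left _ 1 tendsto_id)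
  simpa only [one_div, Pi.inv_def] using h1.inv_tendsto_atTop

lemma tendsto_sqrt_div_one_add_nhds_zero :
    Tendsto (fun t : ℝ => √(t / (1 + t))) (𝓝 0) (𝓝 0) := by
  have : ContinuousAt (fun t : ℝ => √(t / (1 + t))) 0 :=
    (continuousAt_id.div (by fun_prop) (by norm_num)).sqrt
  simpa using this.tendsto

lemma tendsto_sqrt_div_one_add_atTop :
    Tendsto (fun t : ℝ => √(t / (1 + t))) atTop (𝓝[<] 1) := by
  have hquot : Tendsto (fun t : ℝ => t / (1 + t)) atTop (𝓝 1) := by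
    have h1 : Tendsto (fun t : ℝ => (1 + t)⁻¹) atTop (𝓝 0) :=
      (tendsto_atTop_add_const_left _ 1 tendsto_id).inv_tendsto_atTop
    have h := tendsto_const_nhds (x := (1:ℝ)).sub h1
    rw [sub_zero] at h
    refine h.congr' ?_
    filter_upwards [eventually_gt_atTop 0] with t ht
    field_simp
    ring
  refine tendsto_nhdsWithin_iff.2 ⟨by simpa using hquot.sqrt, ?_⟩
  filter_upwards [eventually_ge_atTop 0] with t ht using (sqrt_div_one_add_mem_Ico ht).2

/-- τ is strictly decreasing on (0,∞), τ(t) → ∞ as t → 0⁺ and τ(t) → 0 as t → ∞. -/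
theorem tau_strictAnti_and_limits :
    StrictAntiOn tau (Set.Ioi 0) ∧
    Filter.Tendsto tau (nhdsWithin 0 (Set.Ioi 0)) Filter.atTop ∧
    Filter.Tendsto tau Filter.atTop (nhds 0) := by
  refine ⟨fun s (hs : 0 < s) t (ht : 0 < t) hst => ?_, ?_, ?_⟩
  · have hcs := one_div_sqrt_one_add_mem_Ioo hs
    have hct := one_div_sqrt_one_add_mem_Ioo ht
    have hks := sqrt_div_one_add_mem_Ico hs.le
    have hnum : ellK (1 / √(1 + t)) < ellK (1 / √(1 + s)) :=
      ellK_strictMonoOn (Ioo_subset_Ico_self hct) (Ioo_subset_Ico_self hcs)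
        (strictAntiOn_one_div_sqrt_one_add (mem_Ioi.2 (by linarith)) (mem_Ioi.2 (by linarith)) hst)
    have hden : ellK √(s / (1 + s)) < ellK √(t / (1 + t)) :=
      ellK_strictMonoOn hks (sqrt_div_one_add_mem_Ico ht.le)
        (strictMonoOn_sqrt_div_one_add hs.le ht.le hst)
    have hks_pos := ellK_pos (pow_lt_one₀ hks.1 hks.2 two_ne_zero)
    have hct_pos := ellK_pos (pow_lt_one₀ hct.1.le hct.2 two_ne_zero)
    calc tau t < 2 * ellK (1 / √(1 + t)) / ellK √(s / (1 + s)) := by unfold tau; gcongr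
      _ < tau s := by unfold tau; gcongr
  · have hnum := (tendsto_ellK_nhdsLT_one.comp
      tendsto_one_div_sqrt_one_add_nhdsGT_zero).const_mul_atTop two_pos
    have hden := (tendsto_ellK_nhds_zero.comp (tendsto_sqrt_div_one_add_nhds_zero.mono_left
      (nhdsWithin_le_nhds (s := Ioi 0)))).inv₀ pi_div_two_pos.ne'
    exact (hnum.atTop_mul_pos (inv_pos.2 pi_div_two_pos) hden).congr fun t =>
      (div_eq_mul_inv _ _).symm
  · exact ((tendsto_ellK_nhds_zero.comp tendsto_one_div_sqrt_one_add_atTop).const_mul 2).div_atTop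
      (tendsto_ellK_nhdsLT_one.comp tendsto_sqrt_div_one_add_atTop)
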